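/- arXiv:2005.02918 — 6 statements merged into one kernel-verified Lean document; each statement's English description precedes it below -/
import Mathlib

section
/- Let π : M̃ → M be a C^∞ local diffeomorphism between smooth manifolds, X a vector field on M, and X̃ a vector field on M̃ that is π-related to X. If γ : ℝ → M is an integral curve of X and γ̃ : ℝ → M̃ is any continuous map with π ∘ γ̃ = γ, then γ̃ is an integral curve of X̃. In other words, every continuous lift of an integral curve of X is an integral curve of the lifted vector field. -/
open Manifold Set Filter Topology

/-! A local diffeomorphism `π` has a local inverse `g` near `γ' t`, and continuity of `γ'` makes
`γ' = g ∘ π ∘ γ'` near `t`. The chain rule then recovers the derivative of `γ'` from that of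
`π ∘ γ'`, and `π`-relatedness of the vector fields turns `X` back into `X'`. -/

namespace IsLocalDiffeomorphAt

variable {𝕜 : Type*} [NontriviallyNormedField 𝕜]
  {E : Type*} [NormedAddCommGroup E] [NormedSpace 𝕜 E] {H : Type*} [TopologicalSpace H]
  {I : ModelWithCorners 𝕜 E H} {M : Type*} [TopologicalSpace M] [ChartedSpace H M]
  {F : Type*} [NormedAddCommGroup F] [NormedSpace 𝕜 F] {G : Type*} [TopologicalSpace G]
  {J : ModelWithCorners 𝕜 F G} {N : Type*} [TopologicalSpace N] [ChartedSpace G N]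
  {E₀ : Type*} [NormedAddCommGroup E₀] [NormedSpace 𝕜 E₀] {H₀ : Type*} [TopologicalSpace H₀]
  {I₀ : ModelWithCorners 𝕜 E₀ H₀} {T : Type*} [TopologicalSpace T] [ChartedSpace H₀ T]
  {n : WithTop ℕ∞} {f : M → N} {γ : T → M} {t : T}

theorem hasMFDerivAt_of_hasMFDerivAt_comp (hf : IsLocalDiffeomorphAt I J n f (γ t)) (hn : n ≠ 0)
    (hγ : ContinuousAt γ t) {γ' : TangentSpace I₀ t →L[𝕜] TangentSpace I (γ t)}
    (h : HasMFDerivAt I₀ J (f ∘ γ) t ((mfderiv I J f (γ t)).comp γ')) :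
    HasMFDerivAt I₀ I γ t γ' := by
  have hγ_eq : γ =ᶠ[𝓝 t] hf.localInverse ∘ f ∘ γ :=
    (hγ.eventually hf.localInverse_eventuallyEq_left).mono fun _ hs ↦ hs.symm
  have hinv_comp : (mfderiv J I hf.localInverse (f (γ t))).comp
      ((mfderiv I J f (γ t)).comp γ') = γ' := by
    ext v
    exact (hf.mfderivToContinuousLinearEquiv hn).symm_apply_apply (γ' v)
  exact (((hf.localInverse_mdifferentiableAt hn).hasMFDerivAt.comp t h).congr_of_eventuallyEq
    hγ_eq).congr_mfderiv hinv_comp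

end IsLocalDiffeomorphAt

theorem isIntegralCurve_lift_of_comp_eq_general
    {E : Type*} [NormedAddCommGroup E] [NormedSpace ℝ E]
    {H : Type*} [TopologicalSpace H] (I : ModelWithCorners ℝ E H)
    {M : Type*} [TopologicalSpace M] [ChartedSpace H M]
    {M' : Type*} [TopologicalSpace M'] [ChartedSpace H M']
    (π : M' → M) (hπ : IsLocalDiffeomorph I I (⊤ : ℕ∞) π)
    (X : (x : M) → TangentSpace I x) (X' : (p : M') → TangentSpace I p)
    (hrel : ∀ p : M', mfderiv I I π p (X' p) = X (π p))
    (γ : ℝ → M) (hγ : IsMIntegralCurve γ X)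
    (γ' : ℝ → M') (hcont : Continuous γ') (hlift : π ∘ γ' = γ) :
    IsMIntegralCurve γ' X' := by
  subst hlift
  intro t
  refine (hπ (γ' t)).hasMFDerivAt_of_hasMFDerivAt_comp (by simp) hcont.continuousAt ?_
  have hπ_smulRight : (mfderiv I I π (γ' t)).comp ((1 : ℝ →L[ℝ] ℝ).smulRight (X' (γ' t))) =
      (1 : ℝ →L[ℝ] ℝ).smulRight (X (π (γ' t))) := by
    ext
    simp [hrel]
  exact hπ_smulRight ▸ hγ t

/-- **Lifts of integral curves.** If `π : M' → M` is a `C^∞` local diffeomorphism,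
`X` a vector field on `M` and `X'` a vector field on `M'` that is `π`-related to `X`,
then any continuous lift `γ'` (i.e. `π ∘ γ' = γ`) of an integral curve `γ` of `X`
is an integral curve of `X'`. -/
theorem isIntegralCurve_lift_of_comp_eq
    {E : Type*} [NormedAddCommGroup E] [NormedSpace ℝ E]
    {H : Type*} [TopologicalSpace H] (I : ModelWithCorners ℝ E H)
    {M : Type*} [TopologicalSpace M] [ChartedSpace H M] [IsManifold I (⊤ : ℕ∞) M]
    {M' : Type*} [TopologicalSpace M'] [ChartedSpace H M'] [IsManifold I (⊤ : ℕ∞) M']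
    (π : M' → M) (hπ : IsLocalDiffeomorph I I (⊤ : ℕ∞) π)
    (X : (x : M) → TangentSpace I x) (X' : (p : M') → TangentSpace I p)
    (hrel : ∀ p : M', mfderiv I I π p (X' p) = X (π p))
    (γ : ℝ → M) (hγ : IsMIntegralCurve γ X)
    (γ' : ℝ → M') (hcont : Continuous γ') (hlift : π ∘ γ' = γ) :
    IsMIntegralCurve γ' X' :=
  isIntegralCurve_lift_of_comp_eq_general I π hπ X X' hrel γ hγ γ' hcont hlift
end

section
/- Let π : M̃ → M be a C^∞ local diffeomorphism between smooth manifolds which is additionally a topological covering map (IsCoveringMap π), let X be a vector field on M and X̃ a vector field on M̃ that is π-related to X. Suppose X is past-complete, i.e. for every p ∈ M there exists a curve γ : ℝ → M with γ(0) = p which is an integral curve of X on the half-line (−∞, 0]. Then X̃ is past-complete on M̃: for every p̃ ∈ M̃ there exists γ̃ : ℝ → M̃ with γ̃(0) = p̃ which is an integral curve of X̃ on (−∞, 0]. -/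
/-!
Take a past integral curve `γ` of `X` through `π p'`. As `γ` is continuous on `(-∞, 0]`, the
curve `t ↦ γ (min t 0)` is a continuous map out of the simply connected line, so it lifts through
the covering to a curve starting at `p'`; for `t > 0` the lift is replaced by a local inverse of
`π` applied to `γ`, so that it follows `γ` on a whole neighbourhood of every `t ≤ 0`. A continuous
curve whose image under a local diffeomorphism is differentiable is itself differentiable, with
the velocity pulled back by `dπ`, so `π`-relatedness makes the lift an integral curve of `X'`.
-/

open Manifold Set

def OldIsIntegralCurveOn {E : Type*} [NormedAddCommGroup E] [NormedSpace ℝ E]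
    {H : Type*} [TopologicalSpace H] {I : ModelWithCorners ℝ E H}
    {M : Type*} [TopologicalSpace M] [ChartedSpace H M]
    (γ : ℝ → M) (v : (x : M) → TangentSpace I x) (s : Set ℝ) : Prop :=
  ∀ t ∈ s, HasMFDerivAt 𝓘(ℝ, ℝ) I γ t ((1 : ℝ →L[ℝ] ℝ).smulRight <| v (γ t))

open Topology Filter

theorem IsCoveringMap.exists_lift_of_continuousAt_Iic {E X : Type*} [TopologicalSpace E]
    [TopologicalSpace X] {π : E → X} (hπ : IsCoveringMap π) {γ : ℝ → X}
    (hγ : ∀ t ≤ 0, ContinuousAt γ t) {e : E} (he : π e = γ 0) :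
    ∃ c : ℝ → E, c 0 = e ∧ ∀ t ≤ 0, ContinuousAt c t ∧ π ∘ c =ᶠ[𝓝 t] γ := by
  have hγ_min : Continuous (γ ∘ fun t ↦ min t 0) :=
    ContinuousOn.comp_continuous (fun t ht ↦ (hγ t ht).continuousWithinAt)
      (continuous_id.min continuous_const) fun t ↦ min_le_right t 0
  obtain ⟨C, ⟨hC0, hCγ⟩, -⟩ := hπ.existsUnique_continuousMap_lifts ⟨_, hγ_min⟩ 0 e (by simp [he])
  have hCγ_Iic {t : ℝ} (ht : t ≤ 0) : π (C t) = γ t := by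
    simpa [ht] using congr_fun hCγ t
  obtain ⟨Φ, heΦ, rfl⟩ := hπ.isLocalHomeomorph e
  refine ⟨fun t ↦ if t ≤ 0 then C t else Φ.symm (γ t), by simp [hC0], fun t ht ↦ ?_⟩
  rcases ht.lt_or_eq with ht | rfl
  · have hcC : (fun t ↦ if t ≤ 0 then C t else Φ.symm (γ t)) =ᶠ[𝓝 t] C := by
      filter_upwards [Iic_mem_nhds ht] with s hs using if_pos hs
    refine ⟨C.continuous.continuousAt.congr hcC.symm, ?_⟩
    filter_upwards [hcC, Iic_mem_nhds ht] with s hs hs0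
    simp only [Function.comp_apply, hs, hCγ_Iic hs0]
  · have hγ0 : γ 0 ∈ Φ.target := he ▸ Φ.map_source heΦ
    have hγΦ : ∀ᶠ s in 𝓝 0, γ s ∈ Φ.target := hγ 0 le_rfl (Φ.open_target.mem_nhds hγ0)
    have hCΦ : ∀ᶠ s in 𝓝 0, C s ∈ Φ.source :=
      C.continuous.continuousAt (hC0 ▸ Φ.open_source.mem_nhds heΦ)
    have hc : (fun t ↦ if t ≤ 0 then C t else Φ.symm (γ t)) =ᶠ[𝓝 0] Φ.symm ∘ γ := by
      filter_upwards [hCΦ] with s hs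
      split_ifs with hs0
      · rw [Function.comp_apply, ← hCγ_Iic hs0, Φ.left_inv hs]
      · rfl
    refine ⟨((Φ.continuousAt_symm hγ0).comp (hγ 0 le_rfl)).congr hc.symm, ?_⟩
    filter_upwards [hc, hγΦ] with s hs hsΦ
    simp only [Function.comp_apply, hs, Φ.right_inv hsΦ]

namespace IsLocalDiffeomorphAt

variable {𝕜 : Type*} [NontriviallyNormedField 𝕜]
  {E : Type*} [NormedAddCommGroup E] [NormedSpace 𝕜 E] {H : Type*} [TopologicalSpace H]
  {I : ModelWithCorners 𝕜 E H} {M : Type*} [TopologicalSpace M] [ChartedSpace H M]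
  {F : Type*} [NormedAddCommGroup F] [NormedSpace 𝕜 F] {G : Type*} [TopologicalSpace G]
  {J : ModelWithCorners 𝕜 F G} {N : Type*} [TopologicalSpace N] [ChartedSpace G N]
  {n : WithTop ℕ∞} {f : M → N} {x : M}

theorem mfderiv_localInverse_comp (hf : IsLocalDiffeomorphAt I J n f x) (hn : n ≠ 0) :
    (mfderiv J I hf.localInverse (f x)).comp (mfderiv I J f x) =
      ContinuousLinearMap.id 𝕜 (TangentSpace I x) := by
  rw [← mfderiv_comp x (hf.localInverse_mdifferentiableAt hn) (hf.mdifferentiableAt hn),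
    hf.localInverse_eventuallyEq_left.mfderiv_eq, mfderiv_id]

theorem hasMFDerivAt_of_comp {E' : Type*} [NormedAddCommGroup E'] [NormedSpace 𝕜 E']
    {H' : Type*} [TopologicalSpace H'] {I' : ModelWithCorners 𝕜 E' H'}
    {P : Type*} [TopologicalSpace P] [ChartedSpace H' P] {g : P → M} {y : P}
    {L : TangentSpace I' y →L[𝕜] TangentSpace I (g y)}
    (hf : IsLocalDiffeomorphAt I J n f (g y)) (hn : n ≠ 0) (hg : ContinuousAt g y)
    (hfg : HasMFDerivAt I' J (f ∘ g) y ((mfderiv I J f (g y)).comp L)) :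
    HasMFDerivAt I' I g y L := by
  have hψfg := (hf.localInverse_mdifferentiableAt hn).hasMFDerivAt.comp y hfg
  refine (hψfg.congr_mfderiv ?_).congr_of_eventuallyEq
    (hf.localInverse_eventuallyEq_left.comp_tendsto hg).symm
  rw [← ContinuousLinearMap.comp_assoc, hf.mfderiv_localInverse_comp hn]
  rfl

end IsLocalDiffeomorphAt

theorem OldIsIntegralCurveOn.lift {E : Type*} [NormedAddCommGroup E] [NormedSpace ℝ E]
    {H : Type*} [TopologicalSpace H] {I : ModelWithCorners ℝ E H}
    {M : Type*} [TopologicalSpace M] [ChartedSpace H M]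
    {M' : Type*} [TopologicalSpace M'] [ChartedSpace H M'] {n : WithTop ℕ∞}
    {π : M' → M} (hπ : IsLocalDiffeomorph I I n π) (hn : n ≠ 0)
    {X : (x : M) → TangentSpace I x} {X' : (p : M') → TangentSpace I p}
    (hrel : ∀ p : M', mfderiv I I π p (X' p) = X (π p)) {γ : ℝ → M} {c : ℝ → M'} {s : Set ℝ}
    (hγ : OldIsIntegralCurveOn γ X s) (hc : ∀ t ∈ s, ContinuousAt c t ∧ π ∘ c =ᶠ[𝓝 t] γ) :
    OldIsIntegralCurveOn c X' s := by
  intro t ht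
  obtain ⟨hct, hcγ⟩ := hc t ht
  refine (hπ (c t)).hasMFDerivAt_of_comp hn hct ?_
  have hγt : γ t = π (c t) := hcγ.eq_of_nhds.symm
  refine ((hγ t ht).congr_of_eventuallyEq hcγ).congr_mfderiv ?_
  ext
  change (1 : ℝ) • X (γ t) = mfderiv I I π (c t) ((1 : ℝ) • X' (c t))
  rw [one_smul, one_smul, hrel, hγt]

theorem past_complete_of_isCoveringMap_general
    {E : Type*} [NormedAddCommGroup E] [NormedSpace ℝ E]
    {H : Type*} [TopologicalSpace H] (I : ModelWithCorners ℝ E H)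
    {M : Type*} [TopologicalSpace M] [ChartedSpace H M]
    {M' : Type*} [TopologicalSpace M'] [ChartedSpace H M']
    (π : M' → M) (hπ : IsLocalDiffeomorph I I (⊤ : ℕ∞) π) (hcov : IsCoveringMap π)
    (X : (x : M) → TangentSpace I x) (X' : (p : M') → TangentSpace I p)
    (hrel : ∀ p : M', mfderiv I I π p (X' p) = X (π p))
    (hpast : ∀ p : M, ∃ γ : ℝ → M, γ 0 = p ∧ OldIsIntegralCurveOn γ X (Set.Iic 0)) :
    ∀ p' : M', ∃ γ' : ℝ → M', γ' 0 = p' ∧ OldIsIntegralCurveOn γ' X' (Set.Iic 0) := by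
  intro p'
  obtain ⟨γ, hγ0, hγ⟩ := hpast (π p')
  obtain ⟨c, hc0, hc⟩ :=
    hcov.exists_lift_of_continuousAt_Iic (fun t ht ↦ (hγ t ht).continuousAt) hγ0.symm
  exact ⟨c, hc0, hγ.lift hπ (by simp) hrel hc⟩

/-- **Past-completeness passes to coverings.** If `π : M' → M` is a `C^∞` local diffeomorphism
which is moreover a topological covering map, `X` is a vector field on `M`, `X'` is a vector
field on `M'` that is `π`-related to `X`, and `X` is past-complete (every point lies on a
curve defined and integral on `(-∞, 0]` ending at that point at time `0`),
then `X'` is past-complete on `M'`. -/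
theorem past_complete_of_isCoveringMap
    {E : Type*} [NormedAddCommGroup E] [NormedSpace ℝ E]
    {H : Type*} [TopologicalSpace H] (I : ModelWithCorners ℝ E H)
    {M : Type*} [TopologicalSpace M] [ChartedSpace H M] [IsManifold I (⊤ : ℕ∞) M]
    {M' : Type*} [TopologicalSpace M'] [ChartedSpace H M'] [IsManifold I (⊤ : ℕ∞) M']
    (π : M' → M) (hπ : IsLocalDiffeomorph I I (⊤ : ℕ∞) π) (hcov : IsCoveringMap π)
    (X : (x : M) → TangentSpace I x) (X' : (p : M') → TangentSpace I p)
    (hrel : ∀ p : M', mfderiv I I π p (X' p) = X (π p))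
    (hpast : ∀ p : M, ∃ γ : ℝ → M, γ 0 = p ∧ OldIsIntegralCurveOn γ X (Set.Iic 0)) :
    ∀ p' : M', ∃ γ' : ℝ → M', γ' 0 = p' ∧ OldIsIntegralCurveOn γ' X' (Set.Iic 0) :=
  past_complete_of_isCoveringMap_general I π hπ hcov X X' hrel hpast
end

section
/- Let 2π/3 < θ < π, let r₁, r₂ > 0, and set a := (r₁, 0) and b := r₂·(cos(3θ/2), sin(3θ/2)); note a, b ∈ S_{2θ}. Then every continuous curve γ : [0,1] → ℝ² with image contained in S_{2θ}, γ(0) = a and γ(1) = b satisfies eVariationOn γ [0,1] > ‖a‖ + ‖b‖ (strict inequality in [0,∞], where ‖a‖ + ‖b‖ is viewed as a finite extended real). In particular no curve in the punctured double sector from a to b realizes the length ‖a‖ + ‖b‖. -/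
open Real Set

/-- The closed planar sector of angle `θ` (in Euclidean `ℝ²`) with the apex removed. -/
def punctSectorE (θ : ℝ) : Set (EuclideanSpace ℝ (Fin 2)) :=
  {p | ∃ r : ℝ, 0 < r ∧ ∃ φ : ℝ, 0 ≤ φ ∧ φ ≤ θ ∧
    p = (WithLp.equiv 2 (Fin 2 → ℝ)).symm ![r * Real.cos φ, r * Real.sin φ]}

/-!
Let `u = (cos (3θ/2), sin (3θ/2))` be the direction of `b`. Along `γ` the projection `⟪γ, u⟫`
runs from `r₁ cos (3θ/2) < 0` to `r₂`, so it vanishes at some time `t₂`. A point of `S_{2θ}`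
orthogonal to `u` has polar angle `3θ/2 - π/2 ∈ (π/2, π)`, so its first coordinate is negative;
since that coordinate starts at `r₁ > 0`, it vanishes at some `t₁ < t₂`, and `γ t₁ ≠ γ t₂`.
Projecting the chord from `a` to `γ t₁` on the first axis and the chord from `γ t₂` to `b` on `u`,
the length is at least `r₁ + ‖γ t₁ - γ t₂‖ + r₂ > ‖a‖ + ‖b‖`.
-/

theorem edist_add_edist_add_edist_le_eVariationOn {α E : Type*} [LinearOrder α]
    [PseudoEMetricSpace E] (f : α → E) {a s t b : α} (has : a ≤ s) (hst : s ≤ t) (htb : t ≤ b) :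
    edist (f a) (f s) + edist (f s) (f t) + edist (f t) (f b) ≤ eVariationOn f (Icc a b) := by
  have hsplit := eVariationOn.Icc_add_Icc f (s := univ) has (hst.trans htb) (mem_univ s)
  have hsplit' := eVariationOn.Icc_add_Icc f (s := univ) hst htb (mem_univ t)
  simp only [univ_inter] at hsplit hsplit'
  rw [← hsplit, ← hsplit', ← add_assoc]
  gcongr <;> exact eVariationOn.edist_le f (by simp [*]) (by simp [*])

theorem LipschitzWith.ofReal_sub_le_edist {E : Type*} [PseudoEMetricSpace E]
    {g : E → ℝ} (hg : LipschitzWith 1 g) (x y : E) :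
    ENNReal.ofReal (g x - g y) ≤ edist x y :=
  calc ENNReal.ofReal (g x - g y) ≤ edist (g x) (g y) := by
        rw [edist_dist, Real.dist_eq]; exact ENNReal.ofReal_le_ofReal (le_abs_self _)
    _ ≤ edist x y := by simpa using hg.edist_le_mul x y

theorem lipschitzWith_one_inner_left {E : Type*} [NormedAddCommGroup E] [InnerProductSpace ℝ E]
    {u : E} (hu : ‖u‖ ≤ 1) : LipschitzWith 1 (fun p : E ↦ inner ℝ p u) := by
  simp_rw [real_inner_comm u]
  exact ContinuousLinearMap.lipschitzWith_of_opNorm_le (f := innerSL ℝ u)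
    (by simpa [innerSL_apply_norm] using hu)

noncomputable def polarPoint (r φ : ℝ) : EuclideanSpace ℝ (Fin 2) :=
  (WithLp.equiv 2 (Fin 2 → ℝ)).symm ![r * cos φ, r * sin φ]

theorem inner_polarPoint (r φ s ψ : ℝ) :
    inner ℝ (polarPoint r φ) (polarPoint s ψ) = r * s * cos (φ - ψ) := by
  simp [polarPoint, PiLp.inner_apply, Fin.sum_univ_two, cos_sub]
  ring

theorem norm_polarPoint (r φ : ℝ) : ‖polarPoint r φ‖ = |r| := by
  rw [norm_eq_sqrt_real_inner, inner_polarPoint, sub_self, cos_zero, mul_one, sqrt_mul_self_eq_abs]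

theorem eq_neg_pi_div_two_of_cos_eq_zero {x : ℝ} (h₁ : -(3 * π / 2) < x) (h₂ : x < π / 2)
    (hx : cos x = 0) : x = -(π / 2) := by
  obtain ⟨k, rfl⟩ := cos_eq_zero_iff.1 hx
  have hk : k = -1 := by
    have hk₁ : (-2 : ℝ) < k := by nlinarith [pi_pos]
    have hk₂ : (k : ℝ) < 0 := by nlinarith [pi_pos]
    have : (-2 : ℤ) < k := by exact_mod_cast hk₁
    have : k < 0 := by exact_mod_cast hk₂
    omega
  subst hk
  push_cast
  ring

theorem inner_polarPoint_neg_of_mem_punctSectorE {θ : ℝ} (hθ₁ : 2 * π / 3 < θ) (hθ₂ : θ < π)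
    {p : EuclideanSpace ℝ (Fin 2)} (hp : p ∈ punctSectorE (2 * θ))
    (hperp : inner ℝ p (polarPoint 1 (3 * θ / 2)) = 0) : inner ℝ p (polarPoint 1 0) < 0 := by
  obtain ⟨r, hr, φ, hφ₀, hφθ, rfl⟩ := hp
  change inner ℝ (polarPoint r φ) _ = 0 at hperp
  change inner ℝ (polarPoint r φ) _ < 0
  rw [inner_polarPoint, mul_one, mul_eq_zero, or_iff_right hr.ne'] at hperp
  have hφ := eq_neg_pi_div_two_of_cos_eq_zero (by linarith) (by linarith) hperp
  rw [inner_polarPoint, mul_one, sub_zero]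
  exact mul_neg_of_pos_of_neg hr (cos_neg_of_pi_div_two_lt_of_lt (by linarith) (by linarith))

theorem ofReal_add_lt_eVariationOn_of_lipschitzWith {E : Type*} [PseudoEMetricSpace E]
    {f : ℝ → E} {a b : ℝ} (hab : a ≤ b) (hf : ContinuousOn f (Icc a b)) {g h : E → ℝ}
    (hg : LipschitzWith 1 g) (hh : LipschitzWith 1 h)
    (hga : 0 ≤ g (f a)) (hha : h (f a) ≤ 0) (hhb : 0 ≤ h (f b))
    (hgh : ∀ t ∈ Icc a b, h (f t) = 0 → g (f t) < 0) :
    ENNReal.ofReal (g (f a) + h (f b)) < eVariationOn f (Icc a b) := by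
  obtain ⟨t₂, ht₂, hht₂⟩ : ∃ t ∈ Icc a b, h (f t) = 0 :=
    intermediate_value_Icc hab (hh.continuous.comp_continuousOn hf) ⟨hha, hhb⟩
  have hgt₂ := hgh t₂ ht₂ hht₂
  obtain ⟨t₁, ht₁, hgt₁⟩ : ∃ t ∈ Icc a t₂, g (f t) = 0 :=
    intermediate_value_Icc' ht₂.1
      (hg.continuous.comp_continuousOn (hf.mono (Icc_subset_Icc_right ht₂.2))) ⟨hgt₂.le, hga⟩
  have hmid : 0 < edist (f t₁) (f t₂) :=
    (ENNReal.ofReal_pos.2 (by linarith)).trans_le (hg.ofReal_sub_le_edist _ _)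
  calc ENNReal.ofReal (g (f a) + h (f b))
      = ENNReal.ofReal (g (f a) - g (f t₁)) + 0 + ENNReal.ofReal (h (f b) - h (f t₂)) := by
        rw [hgt₁, hht₂, sub_zero, sub_zero, add_zero, ENNReal.ofReal_add hga hhb]
    _ < edist (f a) (f t₁) + edist (f t₁) (f t₂) + edist (f t₂) (f b) :=
        ENNReal.add_lt_add_of_lt_of_le ENNReal.ofReal_ne_top
          (ENNReal.add_lt_add_of_le_of_lt ENNReal.ofReal_ne_top (hg.ofReal_sub_le_edist _ _) hmid)
          ((hh.ofReal_sub_le_edist _ _).trans_eq (edist_comm _ _))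
    _ ≤ eVariationOn f (Icc a b) :=
        edist_add_edist_add_edist_le_eVariationOn f ht₁.1 ht₁.2 ht₂.2

/-- **No minimizer through the missing apex.** For `2π/3 < θ < π`, `a = (r₁, 0)` and
`b = r₂·(cos (3θ/2), sin (3θ/2))` in the punctured double sector `S_{2θ}`, every continuous
curve from `a` to `b` inside `S_{2θ}` has length strictly larger than `‖a‖ + ‖b‖`. -/
theorem length_gt_in_punctured_double_sector {θ r₁ r₂ : ℝ}
    (hθ₁ : 2 * Real.pi / 3 < θ) (hθ₂ : θ < Real.pi) (hr₁ : 0 < r₁) (hr₂ : 0 < r₂)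
    (a b : EuclideanSpace ℝ (Fin 2))
    (ha : a = (WithLp.equiv 2 (Fin 2 → ℝ)).symm ![r₁, 0])
    (hb : b = (WithLp.equiv 2 (Fin 2 → ℝ)).symm
      ![r₂ * Real.cos (3 * θ / 2), r₂ * Real.sin (3 * θ / 2)])
    (γ : ℝ → EuclideanSpace ℝ (Fin 2)) (hγc : ContinuousOn γ (Set.Icc 0 1))
    (hγS : γ '' Set.Icc 0 1 ⊆ punctSectorE (2 * θ)) (h0 : γ 0 = a) (h1 : γ 1 = b) :
    ENNReal.ofReal (‖a‖ + ‖b‖) < eVariationOn γ (Set.Icc 0 1) := by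
  replace ha : a = polarPoint r₁ 0 := by simp [ha, polarPoint]
  replace hb : b = polarPoint r₂ (3 * θ / 2) := hb
  have hunit (φ : ℝ) : ‖polarPoint 1 φ‖ ≤ 1 := by simp [norm_polarPoint]
  have hcos : cos (3 * θ / 2) < 0 :=
    cos_neg_of_pi_div_two_lt_of_lt (by linarith) (by linarith [pi_pos])
  have key := ofReal_add_lt_eVariationOn_of_lipschitzWith zero_le_one hγc
    (lipschitzWith_one_inner_left (hunit 0)) (lipschitzWith_one_inner_left (hunit (3 * θ / 2)))
    (by simp [h0, ha, inner_polarPoint, hr₁.le])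
    (by rw [h0, ha, inner_polarPoint, zero_sub, cos_neg, mul_one]
        exact mul_nonpos_of_nonneg_of_nonpos hr₁.le hcos.le)
    (by simp [h1, hb, inner_polarPoint, hr₂.le])
    (fun t ht ↦ inner_polarPoint_neg_of_mem_punctSectorE hθ₁ hθ₂ (hγS (mem_image_of_mem γ ht)))
  simpa [h0, h1, ha, hb, inner_polarPoint, norm_polarPoint, abs_of_pos, hr₁, hr₂] using key
end

section
/- Let 2π/3 < θ < π, let r₁, r₂ > 0, and set a := (r₁, 0) and b := r₂·(cos(3θ/2), sin(3θ/2)). Then for every ε > 0 there exists a continuous curve γ : [0,1] → ℝ² with image contained in S_{2θ}, γ(0) = a, γ(1) = b, and eVariationOn γ [0,1] < ‖a‖ + ‖b‖ + ε. Hence the infimum of lengths of curves from a to b inside the punctured double sector S_{2θ} equals ‖a‖ + ‖b‖ (and, combined with the strict lower bound, this infimum is not attained). -/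
/-!
Identify `ℝ²` with `ℂ`. Going radially from `a` to distance `δ` from the apex, around the apex on
the circle of radius `δ`, and radially out to `b` costs `‖a‖ + ‖b‖ + δ (3θ/2 - 2)`, which tends to
`‖a‖ + ‖b‖` with `δ`. Conversely, rotating the sector of angle `2θ < 2π` by `-θ` puts it in the
slit plane, where `arg` is continuous, so every curve from `a` to `b` inside it meets the ray at
angle `3θ/4`. As `3θ/4 ≥ π/2`, that point is at distance at least `‖a‖` from `a` and at least
`‖b‖` from `b`, so the curve has length at least `‖a‖ + ‖b‖`.
-/

open Real Set
open scoped ENNReal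

open Complex (I arg slitPlane)

def punctSectorC (θ : ℝ) : Set ℂ :=
  {z | ∃ r : ℝ, 0 < r ∧ ∃ φ : ℝ, 0 ≤ φ ∧ φ ≤ θ ∧ z = r * Complex.exp (φ * I)}

theorem Isometry.eVariationOn_comp {α E F : Type*} [LinearOrder α] [PseudoEMetricSpace E]
    [PseudoEMetricSpace F] {f : E → F} (hf : Isometry f) (g : α → E) (s : Set α) :
    eVariationOn (f ∘ g) s = eVariationOn g s := by
  simp only [eVariationOn, Function.comp_apply, hf.edist_eq]

theorem eVariationOn_Icc_le_of_dist_le {E : Type*} [PseudoMetricSpace E] {f : ℝ → E}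
    {a b C : ℝ} (hC : 0 ≤ C)
    (h : ∀ x ∈ Icc a b, ∀ y ∈ Icc a b, dist (f x) (f y) ≤ C * dist x y) :
    eVariationOn f (Icc a b) ≤ ENNReal.ofReal (C * (b - a)) := by
  have hf : LipschitzOnWith C.toNNReal f (Icc a b) :=
    LipschitzOnWith.of_dist_le_mul fun x hx y hy => by
      rw [Real.coe_toNNReal _ hC]; exact h x hx y hy
  calc eVariationOn f (Icc a b) = eVariationOn (f ∘ id) (Icc a b) := rfl
    _ ≤ C.toNNReal * eVariationOn id (Icc a b) := hf.comp_eVariationOn_le (mapsTo_id _)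
    _ = ENNReal.ofReal (C * (b - a)) := by
      rw [eVariationOn_id_Icc, ENNReal.ofReal_mul hC]; rfl

theorem eVariationOn_Icc_add_Icc {α E : Type*} [LinearOrder α] [PseudoEMetricSpace E]
    (f : α → E) {a b c : α} (hab : a ≤ b) (hbc : b ≤ c) :
    eVariationOn f (Icc a b) + eVariationOn f (Icc b c) = eVariationOn f (Icc a c) := by
  simpa using eVariationOn.Icc_add_Icc f (s := univ) hab hbc (mem_univ b)

theorem edist_add_edist_le_eVariationOn {α E : Type*} [LinearOrder α] [PseudoEMetricSpace E]
    (f : α → E) {a b t : α} (ht : t ∈ Icc a b) :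
    edist (f a) (f t) + edist (f t) (f b) ≤ eVariationOn f (Icc a b) := by
  rw [← eVariationOn_Icc_add_Icc f ht.1 ht.2]
  exact add_le_add (eVariationOn.edist_le f (left_mem_Icc.2 ht.1) (right_mem_Icc.2 ht.1))
    (eVariationOn.edist_le f (left_mem_Icc.2 ht.2) (right_mem_Icc.2 ht.2))

theorem norm_le_norm_sub_of_real_inner_nonpos {F : Type*} [NormedAddCommGroup F]
    [InnerProductSpace ℝ F] {x y : F} (h : inner ℝ x y ≤ 0) : ‖x‖ ≤ ‖x - y‖ := by
  refine (sq_le_sq₀ (norm_nonneg _) (norm_nonneg _)).1 ?_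
  nlinarith [norm_sub_sq_real x y, sq_nonneg ‖y‖]

theorem real_inner_ofReal_mul_exp (r s α β : ℝ) :
    inner ℝ ((r : ℂ) * Complex.exp (α * I)) ((s : ℂ) * Complex.exp (β * I)) =
      r * s * cos (α - β) := by
  simp [Complex.inner, Complex.mul_re, Complex.mul_im, Complex.exp_ofReal_mul_I_re,
    Complex.exp_ofReal_mul_I_im, cos_sub]
  ring

theorem dist_ofReal_mul_exp_eq_abs_sub (r s φ : ℝ) :
    dist ((r : ℂ) * Complex.exp (φ * I)) ((s : ℂ) * Complex.exp (φ * I)) = |r - s| := by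
  rw [dist_eq_norm, ← sub_mul, norm_mul, Complex.norm_exp_ofReal_mul_I, mul_one,
    ← Complex.ofReal_sub, Complex.norm_real, Real.norm_eq_abs]

theorem dist_ofReal_mul_exp_le_mul_abs_sub {δ : ℝ} (hδ : 0 ≤ δ) (α β : ℝ) :
    dist ((δ : ℂ) * Complex.exp (α * I)) ((δ : ℂ) * Complex.exp (β * I)) ≤ δ * |α - β| := by
  have key : Complex.exp (α * I) - Complex.exp (β * I)
      = Complex.exp (β * I) * (Complex.exp (I * ↑(α - β)) - 1) := by
    rw [mul_sub, ← Complex.exp_add]; push_cast; ring_nf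
  rw [dist_eq_norm, ← mul_sub, key, norm_mul, norm_mul, Complex.norm_exp_ofReal_mul_I, one_mul,
    Complex.norm_real, Real.norm_eq_abs, abs_of_nonneg hδ]
  gcongr
  simpa using Real.norm_exp_I_mul_ofReal_sub_one_le (x := α - β)

theorem le_dist_ofReal_mul_exp_of_cos_nonpos {r s α β : ℝ} (hr : 0 ≤ r) (hs : 0 ≤ s)
    (h : cos (α - β) ≤ 0) :
    r ≤ dist ((r : ℂ) * Complex.exp (α * I)) ((s : ℂ) * Complex.exp (β * I)) := by
  have hinner : inner ℝ ((r : ℂ) * Complex.exp (α * I)) ((s : ℂ) * Complex.exp (β * I)) ≤ 0 := by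
    rw [real_inner_ofReal_mul_exp]; exact mul_nonpos_of_nonneg_of_nonpos (by positivity) h
  calc r = ‖(r : ℂ) * Complex.exp (α * I)‖ := by simp [abs_of_nonneg hr]
    _ ≤ _ := norm_le_norm_sub_of_real_inner_nonpos hinner
    _ = _ := (dist_eq_norm _ _).symm

theorem arg_ofReal_mul_exp {r φ : ℝ} (hr : 0 < r) (hφ : φ ∈ Ioc (-π) π) :
    arg (r * Complex.exp (φ * I)) = φ := by
  rw [Complex.exp_mul_I]; exact Complex.arg_mul_cos_add_sin_mul_I hr hφ

theorem ofReal_mul_exp_mem_slitPlane {r φ : ℝ} (hr : 0 < r) (hφ : φ ∈ Ioo (-π) π) :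
    (r : ℂ) * Complex.exp (φ * I) ∈ slitPlane := by
  rw [Complex.mem_slitPlane_iff_arg, arg_ofReal_mul_exp hr ⟨hφ.1, hφ.2.le⟩]
  exact ⟨hφ.2.ne, mul_ne_zero (by exact_mod_cast hr.ne') (Complex.exp_ne_zero _)⟩

theorem ofReal_mul_exp_mul_exp (r α β : ℝ) :
    (r : ℂ) * Complex.exp (α * I) * Complex.exp (β * I) = r * Complex.exp (↑(α + β) * I) := by
  rw [mul_assoc, ← Complex.exp_add]; push_cast; ring_nf

theorem exists_mem_ray_of_mapsTo_punctSectorC {β r₀ r₁ ψ₁ ψ a b : ℝ} {γ : ℝ → ℂ}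
    (hβ : β < 2 * π) (hab : a ≤ b) (hγ : ContinuousOn γ (Icc a b))
    (hS : MapsTo γ (Icc a b) (punctSectorC β)) (hr₀ : 0 < r₀) (hr₁ : 0 < r₁) (hψ₁ : ψ₁ ≤ β)
    (ha : γ a = r₀) (hb : γ b = r₁ * Complex.exp (ψ₁ * I)) (hψ : ψ ∈ Icc 0 ψ₁) :
    ∃ t ∈ Icc a b, ∃ ρ : ℝ, 0 < ρ ∧ γ t = ρ * Complex.exp (ψ * I) := by
  set g : ℝ → ℂ := fun t => γ t * Complex.exp (↑(-(β / 2)) * I)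
  have harg : ∀ {r φ : ℝ}, 0 < r → φ ∈ Icc 0 β →
      arg (r * Complex.exp (φ * I) * Complex.exp (↑(-(β / 2)) * I)) = φ - β / 2 ∧
        r * Complex.exp (φ * I) * Complex.exp (↑(-(β / 2)) * I) ∈ slitPlane := by
    intro r φ hr hφ
    have hmem : φ + -(β / 2) ∈ Ioo (-π) π := ⟨by linarith [hφ.1], by linarith [hφ.2]⟩
    rw [ofReal_mul_exp_mul_exp, arg_ofReal_mul_exp hr ⟨hmem.1, hmem.2.le⟩]
    exact ⟨by ring, ofReal_mul_exp_mem_slitPlane hr hmem⟩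
  have hpolar : ∀ t ∈ Icc a b, ∃ r : ℝ, 0 < r ∧ ∃ φ ∈ Icc 0 β,
      γ t = r * Complex.exp (φ * I) := fun t ht => by
    obtain ⟨r, hr, φ, hφ₀, hφβ, h⟩ := hS ht
    exact ⟨r, hr, φ, ⟨hφ₀, hφβ⟩, h⟩
  have hcont : ContinuousOn (fun t => arg (g t)) (Icc a b) := fun t ht => by
    obtain ⟨r, hr, φ, hφ, h⟩ := hpolar t ht
    have hslit : g t ∈ slitPlane := by simp only [g, h]; exact (harg hr hφ).2
    exact (Complex.continuousAt_arg hslit).comp_continuousWithinAt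
      ((hγ t ht).mul continuousWithinAt_const)
  have hga : arg (g a) = 0 - β / 2 := by
    simpa [g, ha] using (harg hr₀ ⟨le_rfl, by linarith [hψ.1, hψ.2]⟩).1
  have hgb : arg (g b) = ψ₁ - β / 2 := by
    simp only [g, hb]; exact (harg hr₁ ⟨by linarith [hψ.1, hψ.2], hψ₁⟩).1
  obtain ⟨t, ht, hgt⟩ := intermediate_value_Icc hab hcont
    (show ψ - β / 2 ∈ Icc (arg (g a)) (arg (g b)) by
      rw [hga, hgb]; exact ⟨by linarith [hψ.1], by linarith [hψ.2]⟩)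
  obtain ⟨r, hr, φ, hφ, h⟩ := hpolar t ht
  have hφψ : φ = ψ := by
    have := (harg hr hφ).1
    simp only [g, h] at hgt
    linarith
  exact ⟨t, ht, r, hr, hφψ ▸ h⟩

theorem ofReal_add_le_eVariationOn_of_mapsTo_punctSectorC {β r₀ r₁ ψ a b : ℝ} {γ : ℝ → ℂ}
    (hβ : β < 2 * π) (hab : a ≤ b) (hγ : ContinuousOn γ (Icc a b))
    (hS : MapsTo γ (Icc a b) (punctSectorC β)) (hr₀ : 0 < r₀) (hr₁ : 0 < r₁) (hπψ : π ≤ ψ)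
    (hψβ : ψ ≤ β) (ha : γ a = r₀) (hb : γ b = r₁ * Complex.exp (ψ * I)) :
    ENNReal.ofReal (r₀ + r₁) ≤ eVariationOn γ (Icc a b) := by
  have hπ := pi_pos
  obtain ⟨t, ht, ρ, hρ, hγt⟩ := exists_mem_ray_of_mapsTo_punctSectorC hβ hab hγ hS hr₀ hr₁ hψβ
    ha hb (ψ := ψ / 2) ⟨by linarith, by linarith⟩
  have hcos : cos (ψ / 2) ≤ 0 := cos_nonpos_of_pi_div_two_le_of_le (by linarith) (by linarith)
  have hdist₀ : r₀ ≤ dist (γ a) (γ t) := by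
    simpa [ha, hγt] using le_dist_ofReal_mul_exp_of_cos_nonpos (α := 0) (β := ψ / 2) hr₀.le hρ.le
      (by rwa [zero_sub, cos_neg])
  have hdist₁ : r₁ ≤ dist (γ t) (γ b) := by
    rw [dist_comm, hb, hγt]
    exact le_dist_ofReal_mul_exp_of_cos_nonpos hr₁.le hρ.le
      (by rwa [show ψ - ψ / 2 = ψ / 2 by ring])
  calc ENNReal.ofReal (r₀ + r₁) ≤ edist (γ a) (γ t) + edist (γ t) (γ b) := by
        rw [edist_dist, edist_dist, ← ENNReal.ofReal_add dist_nonneg dist_nonneg]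
        gcongr

    _ ≤ eVariationOn γ (Icc a b) := edist_add_edist_le_eVariationOn γ ht

theorem eVariationOn_radial_le (p q φ a b : ℝ) :
    eVariationOn (fun t => ((p + q * t : ℝ) : ℂ) * Complex.exp (φ * I)) (Icc a b)
      ≤ ENNReal.ofReal (|q| * (b - a)) :=
  eVariationOn_Icc_le_of_dist_le (abs_nonneg q) fun x _ y _ => by
    rw [dist_ofReal_mul_exp_eq_abs_sub, Real.dist_eq, ← abs_mul]; ring_nf; rfl

theorem eVariationOn_arc_le {δ : ℝ} (hδ : 0 ≤ δ) (p q a b : ℝ) :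
    eVariationOn (fun t => (δ : ℂ) * Complex.exp (↑(p + q * t) * I)) (Icc a b)
      ≤ ENNReal.ofReal (δ * |q| * (b - a)) :=
  eVariationOn_Icc_le_of_dist_le (by positivity) fun x _ y _ =>
    (dist_ofReal_mul_exp_le_mul_abs_sub hδ _ _).trans_eq <| by
      rw [Real.dist_eq, mul_assoc, ← abs_mul]; ring_nf

/-- In `[0, 1/3]` the radius drops from `r₀` to `δ`, in `[1/3, 2/3]` the angle sweeps from `0`
to `ψ`, and in `[2/3, 1]` the radius grows from `δ` to `r₁`. -/
noncomputable def detourRadius (r₀ r₁ δ t : ℝ) : ℝ :=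
  δ + (r₀ - δ) * max 0 (1 - 3 * t) + (r₁ - δ) * max 0 (3 * t - 2)

noncomputable def detourAngle (ψ t : ℝ) : ℝ := ψ * max 0 (min 1 (3 * t - 1))

noncomputable def detour (r₀ r₁ δ ψ t : ℝ) : ℂ :=
  detourRadius r₀ r₁ δ t * Complex.exp (detourAngle ψ t * I)

section Detour

variable {r₀ r₁ δ ψ t : ℝ}

theorem detourRadius_of_le_third (ht : t ≤ 1 / 3) :
    detourRadius r₀ r₁ δ t = r₀ + -(3 * (r₀ - δ)) * t := by
  rw [detourRadius, max_eq_right (by linarith), max_eq_left (by linarith)]; ring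

theorem detourRadius_of_mem (ht : t ∈ Icc (1 / 3) (2 / 3)) : detourRadius r₀ r₁ δ t = δ := by
  rw [detourRadius, max_eq_left (by linarith [ht.1]), max_eq_left (by linarith [ht.2])]; ring

theorem detourRadius_of_two_thirds_le (ht : 2 / 3 ≤ t) :
    detourRadius r₀ r₁ δ t = (δ - 2 * (r₁ - δ)) + 3 * (r₁ - δ) * t := by
  rw [detourRadius, max_eq_left (by linarith), max_eq_right (by linarith)]; ring

theorem detourAngle_of_le_third (ht : t ≤ 1 / 3) : detourAngle ψ t = 0 := by
  rw [detourAngle, max_eq_left (min_le_of_right_le (by linarith)), mul_zero]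

theorem detourAngle_of_mem (ht : t ∈ Icc (1 / 3) (2 / 3)) :
    detourAngle ψ t = -ψ + 3 * ψ * t := by
  rw [detourAngle, min_eq_right (by linarith [ht.2]), max_eq_right (by linarith [ht.1])]; ring

theorem detourAngle_of_two_thirds_le (ht : 2 / 3 ≤ t) : detourAngle ψ t = ψ := by
  rw [detourAngle, min_eq_left (by linarith), max_eq_right zero_le_one, mul_one]

theorem detourRadius_pos (hδ : 0 < δ) (hδ₀ : δ ≤ r₀) (hδ₁ : δ ≤ r₁) (t : ℝ) :
    0 < detourRadius r₀ r₁ δ t := by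
  unfold detourRadius
  have := mul_nonneg (sub_nonneg.2 hδ₀) (le_max_left 0 (1 - 3 * t))
  have := mul_nonneg (sub_nonneg.2 hδ₁) (le_max_left 0 (3 * t - 2))
  linarith

theorem detourAngle_mem (hψ : 0 ≤ ψ) (t : ℝ) : detourAngle ψ t ∈ Icc 0 ψ :=
  ⟨mul_nonneg hψ (le_max_left _ _),
    mul_le_of_le_one_right hψ (max_le zero_le_one (min_le_left _ _))⟩

theorem continuous_detour : Continuous (detour r₀ r₁ δ ψ) := by
  unfold detour detourRadius detourAngle; fun_prop

theorem detour_zero : detour r₀ r₁ δ ψ 0 = r₀ := by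
  simp [detour, detourRadius_of_le_third, detourAngle_of_le_third]

theorem detour_one : detour r₀ r₁ δ ψ 1 = r₁ * Complex.exp (ψ * I) := by
  rw [detour, detourRadius_of_two_thirds_le (by norm_num),
    detourAngle_of_two_thirds_le (by norm_num)]
  ring_nf

theorem eVariationOn_detour_le (hψ : 0 ≤ ψ) (hδ : 0 ≤ δ) (hδ₀ : δ ≤ r₀) (hδ₁ : δ ≤ r₁) :
    eVariationOn (detour r₀ r₁ δ ψ) (Icc 0 1) ≤ ENNReal.ofReal (r₀ + r₁ + δ * (ψ - 2)) := by
  have h₁ : eVariationOn (detour r₀ r₁ δ ψ) (Icc 0 (1 / 3)) ≤ ENNReal.ofReal (r₀ - δ) := by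
    rw [eVariationOn.eq_of_eqOn fun t ht => by
      rw [detour, detourRadius_of_le_third ht.2, detourAngle_of_le_third ht.2]]
    refine (eVariationOn_radial_le _ _ _ _ _).trans_eq ?_
    rw [abs_neg, abs_of_nonneg (by linarith)]; ring_nf
  have h₂ : eVariationOn (detour r₀ r₁ δ ψ) (Icc (1 / 3) (2 / 3)) ≤ ENNReal.ofReal (δ * ψ) := by
    rw [eVariationOn.eq_of_eqOn fun t ht => by
      rw [detour, detourRadius_of_mem ht, detourAngle_of_mem ht]]
    refine (eVariationOn_arc_le hδ _ _ _ _).trans_eq ?_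
    rw [abs_of_nonneg (by linarith)]; ring_nf
  have h₃ : eVariationOn (detour r₀ r₁ δ ψ) (Icc (2 / 3) 1) ≤ ENNReal.ofReal (r₁ - δ) := by
    rw [eVariationOn.eq_of_eqOn fun t ht => by
      rw [detour, detourRadius_of_two_thirds_le ht.1, detourAngle_of_two_thirds_le ht.1]]
    refine (eVariationOn_radial_le _ _ _ _ _).trans_eq ?_
    rw [abs_of_nonneg (by linarith)]; ring_nf
  rw [← eVariationOn_Icc_add_Icc _ (by norm_num : (0 : ℝ) ≤ 1 / 3) (by norm_num),
    ← eVariationOn_Icc_add_Icc _ (by norm_num : (1 / 3 : ℝ) ≤ 2 / 3) (by norm_num)]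
  calc _ ≤ ENNReal.ofReal (r₀ - δ) + (ENNReal.ofReal (δ * ψ) + ENNReal.ofReal (r₁ - δ)) := by
        gcongr
    _ = ENNReal.ofReal (r₀ + r₁ + δ * (ψ - 2)) := by
      rw [← ENNReal.ofReal_add (by positivity) (by linarith),
        ← ENNReal.ofReal_add (by linarith) (by positivity)]
      ring_nf

end Detour

theorem exists_curve_punctSectorC_eVariationOn_lt {β r₀ r₁ ψ ε : ℝ} (hr₀ : 0 < r₀)
    (hr₁ : 0 < r₁) (hψ : 0 ≤ ψ) (hψβ : ψ ≤ β) (hε : 0 < ε) :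
    ∃ γ : ℝ → ℂ, Continuous γ ∧ MapsTo γ (Icc 0 1) (punctSectorC β) ∧ γ 0 = r₀ ∧
      γ 1 = r₁ * Complex.exp (ψ * I) ∧
      eVariationOn γ (Icc 0 1) < ENNReal.ofReal (r₀ + r₁ + ε) := by
  set δ := min (min r₀ r₁) (ε / (ψ + 1))
  have hδ : 0 < δ := lt_min (lt_min hr₀ hr₁) (by positivity)
  have hδ₀ : δ ≤ r₀ := (min_le_left _ _).trans (min_le_left _ _)
  have hδ₁ : δ ≤ r₁ := (min_le_left _ _).trans (min_le_right _ _)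
  have hδε : δ * (ψ + 1) ≤ ε := (le_div_iff₀ (by positivity)).1 (min_le_right _ _)
  refine ⟨detour r₀ r₁ δ ψ, continuous_detour, ?_, detour_zero, detour_one, ?_⟩
  · exact fun t _ => ⟨_, detourRadius_pos hδ hδ₀ hδ₁ t, _, (detourAngle_mem hψ t).1,
      (detourAngle_mem hψ t).2.trans hψβ, rfl⟩
  · refine (eVariationOn_detour_le hψ hδ.le hδ₀ hδ₁).trans_lt
      ((ENNReal.ofReal_lt_ofReal_iff (by positivity)).2 ?_)
    nlinarith

theorem orthonormalBasisOneI_repr_ofReal_mul_exp (r φ : ℝ) :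
    Complex.orthonormalBasisOneI.repr (r * Complex.exp (φ * I)) =
      (WithLp.equiv 2 (Fin 2 → ℝ)).symm ![r * cos φ, r * sin φ] := by
  ext i; fin_cases i <;> simp [Complex.exp_ofReal_mul_I_re, Complex.exp_ofReal_mul_I_im]

theorem punctSectorE_eq_preimage (θ : ℝ) :
    punctSectorE θ = Complex.orthonormalBasisOneI.repr.symm ⁻¹' punctSectorC θ := by
  rw [← LinearIsometryEquiv.image_eq_preimage_symm]
  ext p
  simp only [punctSectorE, punctSectorC, mem_image, mem_ofPred_eq]
  constructor
  · rintro ⟨r, hr, φ, h0, h1, rfl⟩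
    exact ⟨_, ⟨r, hr, φ, h0, h1, rfl⟩, orthonormalBasisOneI_repr_ofReal_mul_exp r φ⟩
  · rintro ⟨_, ⟨r, hr, φ, h0, h1, rfl⟩, rfl⟩
    exact ⟨r, hr, φ, h0, h1, orthonormalBasisOneI_repr_ofReal_mul_exp r φ⟩

theorem sInf_eq_ofReal_of_forall_le_of_forall_lt {S : Set ℝ≥0∞} {c : ℝ} (hc : 0 ≤ c)
    (hle : ∀ L ∈ S, ENNReal.ofReal c ≤ L)
    (hlt : ∀ ε : ℝ, 0 < ε → ∃ L ∈ S, L < ENNReal.ofReal (c + ε)) :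
    sInf S = ENNReal.ofReal c := by
  refine le_antisymm (ENNReal.le_of_forall_pos_le_add fun ε hε _ => ?_) (le_sInf hle)
  obtain ⟨L, hL, hLc⟩ := hlt ε hε
  calc sInf S ≤ L := sInf_le hL
    _ ≤ ENNReal.ofReal (c + ε) := hLc.le
    _ = ENNReal.ofReal c + ε := by
      rw [ENNReal.ofReal_add hc ε.coe_nonneg, ENNReal.ofReal_coe_nnreal]

/-- **The infimum of lengths is `‖a‖ + ‖b‖` and is approached.** For `2π/3 < θ < π`,
`a = (r₁, 0)` and `b = r₂·(cos (3θ/2), sin (3θ/2))` in the punctured double sector `S_{2θ}`,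
for every `ε > 0` there is a continuous curve from `a` to `b` inside `S_{2θ}` of length
`< ‖a‖ + ‖b‖ + ε`; hence the infimum of lengths of such curves equals `‖a‖ + ‖b‖`. -/
theorem length_inf_in_punctured_double_sector {θ r₁ r₂ : ℝ}
    (hθ₁ : 2 * Real.pi / 3 < θ) (hθ₂ : θ < Real.pi) (hr₁ : 0 < r₁) (hr₂ : 0 < r₂)
    (a b : EuclideanSpace ℝ (Fin 2))
    (ha : a = (WithLp.equiv 2 (Fin 2 → ℝ)).symm ![r₁, 0])
    (hb : b = (WithLp.equiv 2 (Fin 2 → ℝ)).symm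
      ![r₂ * Real.cos (3 * θ / 2), r₂ * Real.sin (3 * θ / 2)]) :
    (∀ ε : ℝ, 0 < ε → ∃ γ : ℝ → EuclideanSpace ℝ (Fin 2),
      ContinuousOn γ (Set.Icc 0 1) ∧ γ '' Set.Icc 0 1 ⊆ punctSectorE (2 * θ) ∧
      γ 0 = a ∧ γ 1 = b ∧
      eVariationOn γ (Set.Icc 0 1) < ENNReal.ofReal (‖a‖ + ‖b‖ + ε)) ∧
    sInf {L : ℝ≥0∞ | ∃ γ : ℝ → EuclideanSpace ℝ (Fin 2),
        ContinuousOn γ (Set.Icc 0 1) ∧ γ '' Set.Icc 0 1 ⊆ punctSectorE (2 * θ) ∧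
        γ 0 = a ∧ γ 1 = b ∧ L = eVariationOn γ (Set.Icc 0 1)}
      = ENNReal.ofReal (‖a‖ + ‖b‖) := by
  have hθ : 0 < θ := by linarith [pi_pos]
  have h3θ : 3 * θ / 2 ≤ 2 * θ := by linarith
  have hE := punctSectorE_eq_preimage (2 * θ)
  set e := Complex.orthonormalBasisOneI.repr
  have ha' : a = e r₁ :=
    ha.trans (by simpa using (orthonormalBasisOneI_repr_ofReal_mul_exp r₁ 0).symm)
  have hb' : b = e (r₂ * Complex.exp (↑(3 * θ / 2) * I)) :=
    hb.trans (orthonormalBasisOneI_repr_ofReal_mul_exp _ _).symm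
  have hnorm : ‖a‖ + ‖b‖ = r₁ + r₂ := by
    simp only [ha', hb', LinearIsometryEquiv.norm_map, norm_mul, Complex.norm_exp_ofReal_mul_I,
      Complex.norm_real, Real.norm_eq_abs, abs_of_pos hr₁, abs_of_pos hr₂, mul_one]
  have hupper : ∀ ε : ℝ, 0 < ε → ∃ γ : ℝ → EuclideanSpace ℝ (Fin 2),
      ContinuousOn γ (Icc 0 1) ∧ γ '' Icc 0 1 ⊆ punctSectorE (2 * θ) ∧ γ 0 = a ∧ γ 1 = b ∧
      eVariationOn γ (Icc 0 1) < ENNReal.ofReal (‖a‖ + ‖b‖ + ε) := fun ε hε => by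
    obtain ⟨γ, hγ, hS, h0, h1, hvar⟩ :=
      exists_curve_punctSectorC_eVariationOn_lt hr₁ hr₂ (by positivity) h3θ hε
    refine ⟨e ∘ γ, (e.continuous.comp hγ).continuousOn, ?_, by simp [h0, ha'],
      by simp [h1, hb'], by rwa [e.isometry.eVariationOn_comp, hnorm]⟩
    rw [hE, image_subset_iff]
    intro t ht
    simpa only [mem_preimage, Function.comp_apply, LinearIsometryEquiv.symm_apply_apply] using hS ht
  refine ⟨hupper, sInf_eq_ofReal_of_forall_le_of_forall_lt (by positivity) ?_ fun ε hε => ?_⟩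
  · rintro _ ⟨γ, hγ, hS, h0, h1, rfl⟩
    rw [hE, image_subset_iff] at hS
    rw [hnorm, ← e.symm.isometry.eVariationOn_comp]
    exact ofReal_add_le_eVariationOn_of_mapsTo_punctSectorC (by linarith) zero_le_one
      (e.symm.continuous.comp_continuousOn hγ) hS hr₁ hr₂ (by linarith) h3θ
      (by simp [h0, ha']) (by simp [h1, hb'])
  · obtain ⟨γ, hγ, hS, h0, h1, hvar⟩ := hupper ε hε
    exact ⟨_, ⟨γ, hγ, hS, h0, h1, rfl⟩, hvar⟩
end

section
/- In M₂, let p := (−1, 1) and q := (1, −1). Then q lies in the closure of the chronological future I⁺_{M₂}(p), and p lies in the closure of the chronological past I⁻_{M₂}(q). -/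
open Set

/-- The open future cone in two-dimensional Minkowski spacetime: `{v : v.1 > |v.2|}`. -/
def futureCone : Set (ℝ × ℝ) := {v | |v.2| < v.1}

/-- The chronological relation of the region `S ⊆ ℝ²` of two-dimensional Minkowski spacetime:
`p ≪_S q` iff some continuous curve in `S` from `p` to `q` has all its increments in the
open future cone. -/
def Chron (S : Set (ℝ × ℝ)) (p q : ℝ × ℝ) : Prop :=
  ∃ γ : ℝ → ℝ × ℝ, ContinuousOn γ (Set.Icc 0 1) ∧ γ '' Set.Icc 0 1 ⊆ S ∧
    γ 0 = p ∧ γ 1 = q ∧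
    ∀ s s' : ℝ, 0 ≤ s → s < s' → s' ≤ 1 → γ s' - γ s ∈ futureCone

/-- The chronological future of `p` in the region `S`. -/
def Iplus (S : Set (ℝ × ℝ)) (p : ℝ × ℝ) : Set (ℝ × ℝ) := {q | q ∈ S ∧ Chron S p q}

/-- The chronological past of `q` in the region `S`. -/
def Iminus (S : Set (ℝ × ℝ)) (q : ℝ × ℝ) : Set (ℝ × ℝ) := {p | p ∈ S ∧ Chron S p q}

/-- The Minkowski plane with the point `r = (0,0)` and the points `r_k = (0, -1/k)`,
`k ≥ 1`, removed. -/
def M₂ : Set (ℝ × ℝ) :=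
  Set.univ \ ({((0 : ℝ), (0 : ℝ))} ∪ {x : ℝ × ℝ | ∃ k : ℕ, 1 ≤ k ∧ x = (0, -1 / (k : ℝ))})

lemma line_in_M₂_part1 (ε : ℝ) (hε : 0 < ε) :
    ((1 + ε : ℝ), (-1 : ℝ)) ∈ Iplus M₂ (-1, 1) := by
  have hmem : ∀ s : ℝ, s ∈ Set.Icc (0:ℝ) 1 → ((-1 + s * (2 + ε), 1 - 2 * s) : ℝ × ℝ) ∈ M₂ := by
    intro s _
    refine ⟨trivial, ?_⟩
    rintro (h | ⟨k, hk, h⟩)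
    · simp only [Set.mem_singleton_iff, Prod.mk.injEq] at h
      nlinarith [h.1, h.2]
    · simp only [Prod.mk.injEq] at h
      obtain ⟨h1, h2⟩ := h
      have hk' : (1:ℝ) ≤ (k:ℝ) := by exact_mod_cast hk
      have hkpos : (0:ℝ) < (k:ℝ) := by linarith
      -- from h1:  s * (2+ε) = 1, so s < 1/2, so 1 - 2s > 0 > -1/k
      have hs : s * (2 + ε) = 1 := by linarith
      have hspos : 0 < s := by nlinarith
      have : 1 - 2 * s > 0 := by nlinarith
      have hneg : -1 / (k:ℝ) < 0 := by
        apply div_neg_of_neg_of_pos <;> linarith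
      linarith [h2 ▸ this]
  refine ⟨⟨trivial, ?_⟩, ?_⟩
  · rintro (h | ⟨k, hk, h⟩)
    · simp only [Set.mem_singleton_iff, Prod.mk.injEq] at h
      linarith [h.1]
    · simp only [Prod.mk.injEq] at h
      linarith [h.1]
  · refine ⟨fun s => (-1 + s * (2 + ε), 1 - 2 * s), ?_, ?_, ?_, ?_, ?_⟩
    · exact (Continuous.prodMk (by continuity) (by continuity)).continuousOn
    · rintro z ⟨s, hs, rfl⟩; exact hmem s hs
    · norm_num
    · norm_num; ring
    · intro s s' h0 hss h1
      simp only [futureCone, Prod.mk_sub_mk, Set.mem_setOf_eq]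
      rw [abs_lt]
      constructor <;> nlinarith

lemma line_in_M₂_part2 (ε : ℝ) (hε : 0 < ε) (hk : ∀ k : ℕ, (k:ℝ) * ε ≠ 2 + ε) :
    ((-1 - ε : ℝ), (1 : ℝ)) ∈ Iminus M₂ (1, -1) := by
  have hmem : ∀ s : ℝ, s ∈ Set.Icc (0:ℝ) 1 →
      ((-1 - ε + s * (2 + ε), 1 - 2 * s) : ℝ × ℝ) ∈ M₂ := by
    intro s _
    refine ⟨trivial, ?_⟩
    rintro (h | ⟨k, hk1, h⟩)
    · simp only [Set.mem_singleton_iff, Prod.mk.injEq] at h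
      nlinarith [h.1, h.2]
    · simp only [Prod.mk.injEq] at h
      obtain ⟨h1, h2⟩ := h
      have hk' : (1:ℝ) ≤ (k:ℝ) := by exact_mod_cast hk1
      have hkne : (k:ℝ) ≠ 0 := by linarith
      -- h1 : -1 - ε + s*(2+ε) = 0 ; h2 : 1 - 2*s = -1/k
      apply hk k
      field_simp at h2
      -- h2 : (1 - 2*s) * k = -1
      nlinarith [h1, h2]
  refine ⟨⟨trivial, ?_⟩, ?_⟩
  · rintro (h | ⟨k, hk1, h⟩)
    · simp only [Set.mem_singleton_iff, Prod.mk.injEq] at h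
      linarith [h.1]
    · simp only [Prod.mk.injEq] at h
      linarith [h.1]
  · refine ⟨fun s => (-1 - ε + s * (2 + ε), 1 - 2 * s), ?_, ?_, ?_, ?_, ?_⟩
    · exact (Continuous.prodMk (by continuity) (by continuity)).continuousOn
    · rintro z ⟨s, hs, rfl⟩; exact hmem s hs
    · norm_num
    · norm_num
    · intro s s' h0 hss h1
      simp only [futureCone, Prod.mk_sub_mk, Set.mem_setOf_eq]
      rw [abs_lt]
      constructor <;> nlinarith

lemma eps_seq_tendsto : Filter.Tendsto (fun n : ℕ => (4 : ℝ) / (2 * n + 1))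
    Filter.atTop (nhds 0) := by
  apply Filter.Tendsto.div_atTop tendsto_const_nhds
  apply Filter.tendsto_atTop_add_const_right
  exact (tendsto_natCast_atTop_atTop (R := ℝ)).const_mul_atTop two_pos

lemma eps_seq_pos (n : ℕ) : (0:ℝ) < 4 / (2 * n + 1) := by positivity

lemma eps_seq_avoid (n : ℕ) (k : ℕ) : (k:ℝ) * (4 / (2 * n + 1)) ≠ 2 + 4 / (2 * n + 1) := by
  intro h
  have hpos : (0:ℝ) < 2 * n + 1 := by positivity
  have h' : (k:ℝ) * 4 = 2 * (2 * n + 1) + 4 := by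
    field_simp at h
    linarith
  have h'' : 2 * k = 2 * n + 3 := by exact_mod_cast (by linarith : (2:ℝ) * k = 2 * n + 3)
  omega

/-- **`q ∈ cl I⁺(p)` and `p ∈ cl I⁻(q)` in `M₂`.** With `p = (-1,1)` and `q = (1,-1)`,
`q` lies in the closure of the chronological future of `p` in `M₂`, and `p` lies in the
closure of the chronological past of `q` in `M₂`. -/
theorem mem_closure_Iplus_and_Iminus :
    ((1 : ℝ), (-1 : ℝ)) ∈ closure (Iplus M₂ (-1, 1)) ∧
    ((-1 : ℝ), (1 : ℝ)) ∈ closure (Iminus M₂ (1, -1)) := by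
  constructor
  · refine mem_closure_of_tendsto (f := fun n : ℕ => ((1 + 4 / (2 * n + 1) : ℝ), (-1 : ℝ)))
      (b := Filter.atTop) ?_ ?_
    · have : Filter.Tendsto (fun n : ℕ => (1 + 4 / (2 * n + 1) : ℝ))
          Filter.atTop (nhds 1) := by
        have := eps_seq_tendsto.const_add (1:ℝ)
        simpa using this
      exact this.prodMk_nhds tendsto_const_nhds
    · filter_upwards with n
      exact line_in_M₂_part1 _ (eps_seq_pos n)
  · refine mem_closure_of_tendsto (f := fun n : ℕ => ((-1 - 4 / (2 * n + 1) : ℝ), (1 : ℝ)))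
      (b := Filter.atTop) ?_ ?_
    · have : Filter.Tendsto (fun n : ℕ => (-1 - 4 / (2 * n + 1) : ℝ))
          Filter.atTop (nhds (-1)) := by
        have := (eps_seq_tendsto.const_mul (-1:ℝ)).const_add (-1:ℝ)
        simp only [mul_zero, add_zero] at this
        convert this using 2 with n
        ring
      exact this.prodMk_nhds tendsto_const_nhds
    · filter_upwards with n
      exact line_in_M₂_part2 _ (eps_seq_pos n) (eps_seq_avoid n)
end

section
/- The spacetime M₂ is reflecting: for all p, q ∈ M₂, q lies in the closure of I⁺_{M₂}(p) if and only if p lies in the closure of I⁻_{M₂}(q). -/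
open Set

lemma mem_M₂_of_fst_ne {x : ℝ × ℝ} (h : x.1 ≠ 0) : x ∈ M₂ := by
  constructor
  · trivial
  · rintro (h1 | ⟨k, hk, rfl⟩)
    · simp only [mem_singleton_iff] at h1; subst h1; simp at h
    · simp at h

lemma cone_comb {u v : ℝ × ℝ} (hu : u ∈ futureCone) (hv : v ∈ futureCone)
    {a b : ℝ} (ha : 0 ≤ a) (hb : 0 < b) : a • u + b • v ∈ futureCone := by
  simp only [futureCone, mem_setOf_eq] at *
  have h2 : (a • u + b • v).2 = a * u.2 + b * v.2 := by simp
  have h1 : (a • u + b • v).1 = a * u.1 + b * v.1 := by simp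
  rw [h1, h2]
  have := abs_add_le (a * u.2) (b * v.2)
  rw [abs_mul, abs_mul, abs_of_nonneg ha, abs_of_pos hb] at this
  have hau : a * |u.2| ≤ a * u.1 := mul_le_mul_of_nonneg_left hu.le ha
  have hbv : b * |v.2| < b * v.1 := by exact (mul_lt_mul_iff_right₀ hb).mpr hv
  calc |a * u.2 + b * v.2| ≤ a * |u.2| + b * |v.2| := this
    _ < a * u.1 + b * v.1 := by linarith

lemma cone_smul {v : ℝ × ℝ} (hv : v ∈ futureCone) {b : ℝ} (hb : 0 < b) :
    b • v ∈ futureCone := by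
  have := cone_comb hv hv le_rfl hb (a := 0)
  simpa using this


lemma chron_straight {p q : ℝ × ℝ} (h : q - p ∈ futureCone)
    (hmem : ∀ s ∈ Icc (0:ℝ) 1, p + s • (q - p) ∈ M₂) : Chron M₂ p q := by
  refine ⟨fun s => p + s • (q - p), ?_, ?_, by simp, by simp, ?_⟩
  · fun_prop
  · rintro x ⟨s, hs, rfl⟩; exact hmem s hs
  · intro s s' _ hss' _
    have : (p + s' • (q - p)) - (p + s • (q - p)) = (s' - s) • (q - p) := by module
    rw [this]
    exact cone_smul h (by linarith)

lemma chron_bent {p q m : ℝ × ℝ} (h1 : m - p ∈ futureCone) (h2 : q - m ∈ futureCone)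
    (hm : m ∈ M₂) (hp1 : p.1 < 0) (hq1 : 0 < q.1) (hm1 : m.1 = 0) : Chron M₂ p q := by
  set γ : ℝ → ℝ × ℝ := fun s => if s ≤ 1/2 then p + (2*s) • (m - p) else m + (2*s - 1) • (q - m)
    with hγ
  have hcont : Continuous γ := by
    apply Continuous.if_le (by fun_prop) (by fun_prop) continuous_id continuous_const
    intro x hx
    subst hx
    norm_num
  refine ⟨γ, hcont.continuousOn, ?_, ?_, ?_, ?_⟩
  · rintro x ⟨s, hs, rfl⟩
    rcases lt_trichotomy s (1/2) with hlt | heq | hgt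
    · apply mem_M₂_of_fst_ne
      simp only [hγ, if_pos hlt.le]
      have : (p + (2*s) • (m - p)).1 = p.1 + (2*s) * (m.1 - p.1) := by simp
      rw [this, hm1]
      nlinarith [hs.1]
    · subst heq
      simpa [hγ] using hm
    · apply mem_M₂_of_fst_ne
      simp only [hγ, if_neg (not_le.mpr hgt)]
      have : (m + (2*s-1) • (q - m)).1 = m.1 + (2*s-1) * (q.1 - m.1) := by simp
      rw [this, hm1]
      nlinarith
  · simp [hγ]
  · norm_num [hγ]
  · intro s s' hs hss' hs'
    rcases le_or_gt s' (1/2) with h' | h'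
    · have hsle : s ≤ 1/2 := by linarith
      simp only [hγ, if_pos h', if_pos hsle]
      have : (p + (2*s') • (m - p)) - (p + (2*s) • (m - p)) = (2*s' - 2*s) • (m - p) := by
        module
      rw [this]
      exact cone_smul h1 (by linarith)
    · rcases le_or_gt s (1/2) with hsle | hsgt
      · simp only [hγ, if_pos hsle, if_neg (not_le.mpr h')]
        have : (m + (2*s'-1) • (q - m)) - (p + (2*s) • (m - p))
            = (1 - 2*s) • (m - p) + (2*s' - 1) • (q - m) := by module
        rw [this]
        exact cone_comb h1 h2 (by linarith) (by linarith)
      · simp only [hγ, if_neg (not_le.mpr h'), if_neg (not_le.mpr hsgt)]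
        have : (m + (2*s'-1) • (q - m)) - (m + (2*s-1) • (q - m)) = (2*s' - 2*s) • (q - m) := by
          module
        rw [this]
        exact cone_smul h2 (by linarith)

lemma exists_avoid {a b : ℝ} (h : a < b) :
    ∃ x ∈ Set.Ioo a b, x ≠ 0 ∧ ∀ k : ℕ, x ≠ -1 / (k : ℝ) := by
  set D : Set ℝ := insert 0 (Set.range fun k : ℕ => -1 / (k : ℝ)) with hD
  have hDc : D.Countable := (Set.countable_range _).insert 0
  have hd : Dense Dᶜ := hDc.dense_compl ℝ
  obtain ⟨x, hx, hxo⟩ := hd.exists_mem_open isOpen_Ioo (Set.nonempty_Ioo.mpr h)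
  refine ⟨x, hxo, ?_, ?_⟩
  · intro h0; exact hx (by simp [hD, h0])
  · intro k hk; exact hx (by rw [hD]; right; exact ⟨k, hk.symm⟩)

lemma chron_of_cone {p q : ℝ × ℝ} (hp : p ∈ M₂) (hq : q ∈ M₂)
    (h : q - p ∈ futureCone) : Chron M₂ p q := by
  have hc : |q.2 - p.2| < q.1 - p.1 := h
  have habs := abs_lt.mp hc
  rcases le_or_gt 0 p.1 with hp1 | hp1
  · apply chron_straight h
    intro s hs
    rcases eq_or_lt_of_le hs.1 with h0 | h0
    · simpa [← h0] using hp
    · apply mem_M₂_of_fst_ne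
      have : (p + s • (q - p)).1 = p.1 + s * (q.1 - p.1) := by simp
      rw [this]
      nlinarith
  · rcases le_or_gt q.1 0 with hq1 | hq1
    · apply chron_straight h
      intro s hs
      rcases eq_or_lt_of_le hs.2 with h1 | h1
      · rw [h1]; simpa using hq
      · apply mem_M₂_of_fst_ne
        have : (p + s • (q - p)).1 = p.1 + s * (q.1 - p.1) := by simp
        rw [this]
        nlinarith
    · -- p.1 < 0 < q.1 : bent curve through (0, x₀)
      have hab : max (p.2 + p.1) (q.2 - q.1) < min (p.2 - p.1) (q.2 + q.1) := by
        apply max_lt <;> apply lt_min <;> linarith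
      obtain ⟨x₀, hx₀, hx0, hxk⟩ := exists_avoid hab
      have ha := max_lt_iff.mp hx₀.1
      have hb := lt_min_iff.mp hx₀.2
      refine chron_bent (m := ((0:ℝ), x₀)) ?_ ?_ ?_ hp1 hq1 rfl
      · show |(((0:ℝ), x₀) - p).2| < (((0:ℝ), x₀) - p).1
        have h2 : (((0:ℝ), x₀) - p).2 = x₀ - p.2 := rfl
        have h1 : (((0:ℝ), x₀) - p).1 = -p.1 := by simp
        rw [h1, h2, abs_lt]; constructor <;> linarith [ha.1, hb.1]
      · show |(q - ((0:ℝ), x₀)).2| < (q - ((0:ℝ), x₀)).1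
        have h2 : (q - ((0:ℝ), x₀)).2 = q.2 - x₀ := rfl
        have h1 : (q - ((0:ℝ), x₀)).1 = q.1 := by simp
        rw [h1, h2, abs_lt]; constructor <;> linarith [ha.2, hb.2]
      · constructor
        · trivial
        · rintro (h1 | ⟨k, hk, hkeq⟩)
          · simp only [mem_singleton_iff, Prod.ext_iff] at h1
            exact hx0 h1.2
          · simp only [Prod.ext_iff] at hkeq
            exact hxk k hkeq.2

lemma cone_of_chron {S : Set (ℝ × ℝ)} {p q : ℝ × ℝ} (h : Chron S p q) :
    q - p ∈ futureCone := by
  obtain ⟨γ, _, _, h0, h1, hinc⟩ := h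
  have := hinc 0 1 le_rfl one_pos le_rfl
  rwa [h0, h1] at this


lemma closure_Iplus_sub (p : ℝ × ℝ) :
    closure (Iplus M₂ p) ⊆ {q : ℝ × ℝ | |q.2 - p.2| ≤ q.1 - p.1} := by
  apply closure_minimal
  · rintro q ⟨_, hc⟩
    have hlt : |(q - p).2| < (q - p).1 := cone_of_chron hc
    show |q.2 - p.2| ≤ q.1 - p.1
    exact hlt.le
  · exact isClosed_le ((continuous_snd.sub continuous_const).abs)
      (continuous_fst.sub continuous_const)

lemma closure_Iminus_sub (q : ℝ × ℝ) :
    closure (Iminus M₂ q) ⊆ {p : ℝ × ℝ | |q.2 - p.2| ≤ q.1 - p.1} := by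
  apply closure_minimal
  · rintro p ⟨_, hc⟩
    have hlt : |(q - p).2| < (q - p).1 := cone_of_chron hc
    show |q.2 - p.2| ≤ q.1 - p.1
    exact hlt.le
  · exact isClosed_le ((continuous_const.sub continuous_snd).abs)
      (continuous_const.sub continuous_fst)

lemma small_eps (δ : ℝ) (hδ : 0 < δ) (c : ℝ) : ∃ ε : ℝ, 0 < ε ∧ ε < δ ∧ c + ε ≠ 0 := by
  rcases eq_or_ne (c + δ/2) 0 with h0 | h0
  · exact ⟨δ/3, by linarith, by linarith, fun hc => by linarith⟩
  · exact ⟨δ/2, by linarith, by linarith, h0⟩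

lemma mem_closure_Iplus {p q : ℝ × ℝ} (hp : p ∈ M₂) (h : |q.2 - p.2| ≤ q.1 - p.1) :
    q ∈ closure (Iplus M₂ p) := by
  rw [Metric.mem_closure_iff]
  intro δ hδ
  obtain ⟨ε, hε0, hεδ, hne⟩ := small_eps δ hδ q.1
  have hq' : ((q.1 + ε, q.2) : ℝ × ℝ) ∈ M₂ := mem_M₂_of_fst_ne hne
  refine ⟨(q.1 + ε, q.2), ⟨hq', chron_of_cone hp hq' ?_⟩, ?_⟩
  · show |(((q.1 + ε, q.2) : ℝ × ℝ) - p).2| < (((q.1 + ε, q.2) : ℝ × ℝ) - p).1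
    have h1 : (((q.1 + ε, q.2) : ℝ × ℝ) - p).1 = q.1 + ε - p.1 := rfl
    have h2 : (((q.1 + ε, q.2) : ℝ × ℝ) - p).2 = q.2 - p.2 := rfl
    rw [h1, h2]; linarith
  · rw [Prod.dist_eq]
    simp [Real.dist_eq, abs_of_pos hε0]
    exact ⟨hεδ, hδ⟩

lemma mem_closure_Iminus {p q : ℝ × ℝ} (hq : q ∈ M₂) (h : |q.2 - p.2| ≤ q.1 - p.1) :
    p ∈ closure (Iminus M₂ q) := by
  rw [Metric.mem_closure_iff]
  intro δ hδ
  obtain ⟨ε, hε0, hεδ, hne⟩ := small_eps δ hδ (-p.1)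
  have hne' : p.1 - ε ≠ 0 := fun hc => hne (by linarith)
  have hp' : ((p.1 - ε, p.2) : ℝ × ℝ) ∈ M₂ := mem_M₂_of_fst_ne hne'
  refine ⟨(p.1 - ε, p.2), ⟨hp', chron_of_cone hp' hq ?_⟩, ?_⟩
  · show |(q - ((p.1 - ε, p.2) : ℝ × ℝ)).2| < (q - ((p.1 - ε, p.2) : ℝ × ℝ)).1
    have h1 : (q - ((p.1 - ε, p.2) : ℝ × ℝ)).1 = q.1 - (p.1 - ε) := rfl
    have h2 : (q - ((p.1 - ε, p.2) : ℝ × ℝ)).2 = q.2 - p.2 := rfl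
    rw [h1, h2]; linarith
  · rw [Prod.dist_eq]
    simp [Real.dist_eq, abs_of_pos hε0]
    exact ⟨hεδ, hδ⟩

/-- **`M₂` is reflecting.** For all points `p, q` of the spacetime `M₂`,
`q ∈ closure I⁺(p)` if and only if `p ∈ closure I⁻(q)`. -/
theorem M₂_reflecting :
    ∀ p ∈ M₂, ∀ q ∈ M₂,
      (q ∈ closure (Iplus M₂ p) ↔ p ∈ closure (Iminus M₂ q)) := by
  intro p hp q hq
  constructor
  · intro h
    exact mem_closure_Iminus hq (closure_Iplus_sub p h)
  · intro h
    exact mem_closure_Iplus hp (closure_Iminus_sub q h)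
end
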